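/- Let W be a discrete memoryless channel with binary uniform input X and output Y, and define W⁻ and W⁺ by W⁻(y₁,y₂|x₁) = (1/2) ∑_{x₂} W(y₁|x₁⊕x₂) W(y₂|x₂) and W⁺(y₁,y₂,x₁|x₂) = (1/2) W(y₁|x₁⊕x₂) W(y₂|x₂). Then I(W⁻) + I(W⁺) = 2 I(W), where I denotes the mutual information between a uniform input and the channel output. -/

import Mathlib

open scoped BigOperators

/-- Mutual information of a binary-input discrete channel `W : Bool → Y → ℝ`
with uniformly distributed input. -/
noncomputable def mutualInfo {Y : Type*} [Fintype Y] (W : Bool → Y → ℝ) : ℝ :=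
  ∑ x : Bool, ∑ y : Y,
    (1/2) * W x y * Real.logb 2 (W x y / ((W false y + W true y) / 2))

/-- The minus (worse) polar transform of `W`. -/
noncomputable def polarMinus {Y : Type*} (W : Bool → Y → ℝ) :
    Bool → Y × Y → ℝ :=
  fun x₁ y => (1/2) * ∑ x₂ : Bool, W (xor x₁ x₂) y.1 * W x₂ y.2

/-- The plus (better) polar transform of `W`. -/
noncomputable def polarPlus {Y : Type*} (W : Bool → Y → ℝ) :
    Bool → Y × Y × Bool → ℝ :=
  fun x₂ y => (1/2) * W (xor y.2.2 x₂) y.1 * W x₂ y.2.1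

/-!
Let `U₁, U₂` be independent uniform bits, and let `Y₁, Y₂` be the outputs of two independent copies
of `W` fed with `U₁ ⊕ U₂` and `U₂`. Since `W⁻` is the marginal of `W⁺` in `u₂`, both `I(W⁻)` and
`I(W⁺)` are expectations over this joint law, and their information densities add up pointwise, the
`W⁻` factors cancelling:
`log (W⁻/(q(y₁) q(y₂))) + log (2W⁺/W⁻) = log (W(y₁|u₁ ⊕ u₂)/q(y₁)) + log (W(y₂|u₂)/q(y₂))`,
where `q` is the output law of `W`. Each term on the right sees a single copy of `W`, so its
expectation is `I(W)`.
-/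

open Finset Real

theorem Real.logb_div_mul_add_logb_mul_div {a b q₁ q₂ m : ℝ} (ha : a ≠ 0) (hb : b ≠ 0)
    (hq₁ : q₁ ≠ 0) (hq₂ : q₂ ≠ 0) (hm : m ≠ 0) :
    logb 2 (m / (q₁ * q₂)) + logb 2 (a * b / m) = logb 2 (a / q₁) + logb 2 (b / q₂) := by
  rw [← logb_mul (by positivity) (by positivity), ← logb_mul (by positivity) (by positivity)]
  congr 1
  field_simp

theorem Fintype.sum_sum_comp_xor {M : Type*} [AddCommMonoid M] (g : Bool → Bool → M) :
    ∑ u₁, ∑ u₂, g (xor u₁ u₂) u₂ = ∑ x₁, ∑ x₂, g x₁ x₂ := by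
  simp only [Fintype.sum_bool, Bool.xor_false, Bool.xor_true, Bool.not_false, Bool.not_true]
  abel

section PolarTransform

variable {Y : Type*} (W : Bool → Y → ℝ)

noncomputable def outputProb (y : Y) : ℝ := (W false y + W true y) / 2

theorem mutualInfo_eq [Fintype Y] :
    mutualInfo W = ∑ x, ∑ y, 1/2 * W x y * logb 2 (W x y / outputProb W y) := rfl

theorem polarMinus_eq_sum_polarPlus (u₁ : Bool) (y : Y × Y) :
    polarMinus W u₁ y = ∑ u₂, polarPlus W u₂ (y.1, y.2, u₁) := by
  simp only [polarMinus, polarPlus, mul_sum, mul_assoc]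

theorem outputProb_polarMinus (y : Y × Y) :
    outputProb (polarMinus W) y = outputProb W y.1 * outputProb W y.2 := by
  simp only [outputProb, polarMinus, Fintype.sum_bool, Bool.xor_false, Bool.xor_true,
    Bool.not_false, Bool.not_true]
  ring

theorem outputProb_polarPlus (y : Y × Y) (u₁ : Bool) :
    outputProb (polarPlus W) (y.1, y.2, u₁) = polarMinus W u₁ y / 2 := by
  rw [polarMinus_eq_sum_polarPlus, Fintype.sum_bool, outputProb, add_comm]

variable {W}

theorem outputProb_pos (hW : ∀ x y, 0 ≤ W x y) {x : Bool} {y : Y} (h : 0 < W x y) :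
    0 < outputProb W y := by
  have := hW (!x) y
  cases x <;> simp only [outputProb, Bool.not_false, Bool.not_true] at * <;> linarith

theorem polarPlus_nonneg (hW : ∀ x y, 0 ≤ W x y) (u₂ : Bool) (z : Y × Y × Bool) :
    0 ≤ polarPlus W u₂ z :=
  mul_nonneg (mul_nonneg (by norm_num) (hW _ _)) (hW _ _)

theorem polarPlus_le_polarMinus (hW : ∀ x y, 0 ≤ W x y) (u₁ u₂ : Bool) (y : Y × Y) :
    polarPlus W u₂ (y.1, y.2, u₁) ≤ polarMinus W u₁ y := by
  rw [polarMinus_eq_sum_polarPlus]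
  exact single_le_sum (fun u _ => polarPlus_nonneg hW u _) (mem_univ u₂)

theorem polarPlus_mul_logb_add_mul_logb (hW : ∀ x y, 0 ≤ W x y) (u₁ u₂ : Bool) (y : Y × Y) :
    1/2 * polarPlus W u₂ (y.1, y.2, u₁) *
        logb 2 (polarMinus W u₁ y / (outputProb W y.1 * outputProb W y.2)) +
      1/2 * polarPlus W u₂ (y.1, y.2, u₁) *
        logb 2 (polarPlus W u₂ (y.1, y.2, u₁) / (polarMinus W u₁ y / 2)) =
    1/2 * polarPlus W u₂ (y.1, y.2, u₁) * logb 2 (W (xor u₁ u₂) y.1 / outputProb W y.1) +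
      1/2 * polarPlus W u₂ (y.1, y.2, u₁) * logb 2 (W u₂ y.2 / outputProb W y.2) := by
  rcases (polarPlus_nonneg hW u₂ (y.1, y.2, u₁)).eq_or_lt with hP0 | hP
  · simp [← hP0]
  have ha : 0 < W (xor u₁ u₂) y.1 := (hW _ _).lt_of_ne' fun h => by simp [polarPlus, h] at hP
  have hb : 0 < W u₂ y.2 := (hW _ _).lt_of_ne' fun h => by simp [polarPlus, h] at hP
  have hM : 0 < polarMinus W u₁ y := hP.trans_le (polarPlus_le_polarMinus hW u₁ u₂ y)
  have hPM : polarPlus W u₂ (y.1, y.2, u₁) / (polarMinus W u₁ y / 2) =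
      W (xor u₁ u₂) y.1 * W u₂ y.2 / polarMinus W u₁ y := by
    simp only [polarPlus]; ring
  rw [hPM, ← mul_add, ← mul_add, logb_div_mul_add_logb_mul_div ha.ne' hb.ne'
    (outputProb_pos hW ha).ne' (outputProb_pos hW hb).ne' hM.ne']

theorem mutualInfo_polarMinus_eq [Fintype Y] :
    mutualInfo (polarMinus W) = ∑ u₁, ∑ u₂, ∑ y : Y × Y, 1/2 * polarPlus W u₂ (y.1, y.2, u₁) *
      logb 2 (polarMinus W u₁ y / (outputProb W y.1 * outputProb W y.2)) := by
  rw [mutualInfo_eq]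
  refine sum_congr rfl fun u₁ _ => ?_
  rw [sum_comm]
  refine sum_congr rfl fun y _ => ?_
  rw [← sum_mul, ← mul_sum, ← polarMinus_eq_sum_polarPlus, outputProb_polarMinus]

theorem mutualInfo_polarPlus_eq [Fintype Y] :
    mutualInfo (polarPlus W) = ∑ u₁, ∑ u₂, ∑ y : Y × Y, 1/2 * polarPlus W u₂ (y.1, y.2, u₁) *
      logb 2 (polarPlus W u₂ (y.1, y.2, u₁) / (polarMinus W u₁ y / 2)) := by
  have sum_split (g : Y × Y × Bool → ℝ) : ∑ z, g z = ∑ y : Y × Y, ∑ u₁, g (y.1, y.2, u₁) := by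
    rw [← (Equiv.prodAssoc Y Y Bool).sum_comp, Fintype.sum_prod_type]
    rfl
  simp only [mutualInfo_eq, sum_split, outputProb_polarPlus]
  exact sum_comm_cycle

-- The substitution `(x₁, x₂) = (u₁ ⊕ u₂, u₂)` turns the joint law of `(U₂, Y₁, Y₂, U₁)` under `W⁺`
-- into two independent uses of `W`.
theorem sum_polarPlus_mul_eq_sum_mul_mul [Fintype Y] (F : Bool → Bool → Y × Y → ℝ) :
    ∑ u₁, ∑ u₂, ∑ y : Y × Y, 1/2 * polarPlus W u₂ (y.1, y.2, u₁) * F (xor u₁ u₂) u₂ y =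
      ∑ x₁, ∑ x₂, ∑ y : Y × Y, 1/2 * W x₁ y.1 * (1/2 * W x₂ y.2) * F x₁ x₂ y := by
  rw [← Fintype.sum_sum_comp_xor fun x₁ x₂ =>
    ∑ y : Y × Y, 1/2 * W x₁ y.1 * (1/2 * W x₂ y.2) * F x₁ x₂ y]
  simp only [polarPlus]
  ring_nf

theorem sum_polarPlus_mul_comp_fst [Fintype Y] (hWs : ∀ x, ∑ y, W x y = 1) (f : Bool → Y → ℝ) :
    ∑ u₁, ∑ u₂, ∑ y : Y × Y, 1/2 * polarPlus W u₂ (y.1, y.2, u₁) * f (xor u₁ u₂) y.1 =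
      ∑ x, ∑ y, 1/2 * W x y * f x y := by
  rw [sum_polarPlus_mul_eq_sum_mul_mul (fun x₁ _ y => f x₁ y.1)]
  simp only [Fintype.sum_prod_type, mul_right_comm _ (1/2 * W _ _) (f _ _), ← mul_sum, hWs,
    ← sum_mul, Fintype.sum_bool]
  ring

theorem sum_polarPlus_mul_comp_snd [Fintype Y] (hWs : ∀ x, ∑ y, W x y = 1) (f : Bool → Y → ℝ) :
    ∑ u₁, ∑ u₂, ∑ y : Y × Y, 1/2 * polarPlus W u₂ (y.1, y.2, u₁) * f u₂ y.2 =
      ∑ x, ∑ y, 1/2 * W x y * f x y := by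
  rw [sum_polarPlus_mul_eq_sum_mul_mul (fun _ x₂ y => f x₂ y.2), sum_comm]
  simp only [Fintype.sum_prod_type, mul_assoc, ← mul_sum, ← sum_mul, hWs, Fintype.sum_bool]
  ring

end PolarTransform

theorem polar_chain_rule {Y : Type*} [Fintype Y] (W : Bool → Y → ℝ)
    (hW : ∀ x y, 0 ≤ W x y) (hWs : ∀ x, ∑ y, W x y = 1) :
    mutualInfo (polarMinus W) + mutualInfo (polarPlus W) = 2 * mutualInfo W := by
  rw [mutualInfo_polarMinus_eq, mutualInfo_polarPlus_eq]
  calc _ = ∑ u₁, ∑ u₂, ∑ y : Y × Y,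
        (1/2 * polarPlus W u₂ (y.1, y.2, u₁) * logb 2 (W (xor u₁ u₂) y.1 / outputProb W y.1) +
          1/2 * polarPlus W u₂ (y.1, y.2, u₁) * logb 2 (W u₂ y.2 / outputProb W y.2)) := by
        simp only [← sum_add_distrib, polarPlus_mul_logb_add_mul_logb hW]
    _ = 2 * mutualInfo W := by
        rw [mutualInfo_eq]
        simp only [sum_add_distrib,
          sum_polarPlus_mul_comp_fst hWs fun x y => logb 2 (W x y / outputProb W y),
          sum_polarPlus_mul_comp_snd hWs fun x y => logb 2 (W x y / outputProb W y)]
        ring
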